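/- Fix constants h₀ > 0 and c > 0. The function h(x,t) = h₀ exp( c h₀ x (e^t − 1) + t ), defined for x > 0 and t ≥ 0, satisfies the integral equation h(x,t) = h₀ + ∫₀^t [ c (h*h)(x,s) + h(x,s) ] ds, where (h*h)(x,s) = ∫₀^x h(x−y,s) h(y,s) dy is the convolution in the mass variable. -/

import Mathlib

/-!
Write `h(x,t) = A(t) e^{k(t) x}` with `A(t) = h₀ eᵗ` and `k(t) = c h₀ (eᵗ - 1)`. For such a profile
the integrand of the convolution `h(x-y,t) h(y,t) = A² e^{k x}` does not depend on `y`, so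
`(h*h)(x,t) = x h₀ eᵗ h(x,t)`, and the equation becomes the linear ODE `∂ₜh = (c h₀ x eᵗ + 1) h`,
which `h` solves with `h(x,0) = h₀`.
-/

open Real

theorem integral_mul_exp_mul_sub_mul_mul_exp (A k x : ℝ) :
    ∫ y in (0:ℝ)..x, A * exp (k * (x - y)) * (A * exp (k * y)) = x * (A ^ 2 * exp (k * x)) := by
  have hconst : ∀ y, A * exp (k * (x - y)) * (A * exp (k * y)) = A ^ 2 * exp (k * x) := by
    intro y
    rw [mul_mul_mul_comm, ← exp_add, ← sq]
    ring_nf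
  simp only [hconst, intervalIntegral.integral_const, smul_eq_mul, sub_zero]

namespace ExplicitSupersolution

variable (h₀ c : ℝ)

noncomputable def profile (x t : ℝ) : ℝ :=
  h₀ * exp (c * h₀ * x * (exp t - 1) + t)

theorem profile_eq (x t : ℝ) :
    profile h₀ c x t = h₀ * exp t * exp (c * h₀ * (exp t - 1) * x) := by
  rw [profile, add_comm, exp_add]
  ring_nf

theorem profile_zero (x : ℝ) : profile h₀ c x 0 = h₀ := by
  simp [profile]

theorem integral_profile_mul_profile (x t : ℝ) :
    ∫ y in (0:ℝ)..x, profile h₀ c (x - y) t * profile h₀ c y t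
      = x * h₀ * exp t * profile h₀ c x t := by
  simp only [profile_eq]
  rw [integral_mul_exp_mul_sub_mul_mul_exp]
  ring

theorem hasDerivAt_profile (x t : ℝ) :
    HasDerivAt (profile h₀ c x) ((c * h₀ * x * exp t + 1) * profile h₀ c x t) t := by
  have hexponent : HasDerivAt (fun u => c * h₀ * x * (exp u - 1) + u) (c * h₀ * x * exp t + 1) t :=
    (((hasDerivAt_exp t).sub_const 1).const_mul (c * h₀ * x)).add (hasDerivAt_id t)
  exact (hexponent.exp.const_mul h₀).congr_deriv (by rw [profile]; ring)

theorem continuous_profile (x : ℝ) : Continuous (profile h₀ c x) := by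
  unfold profile
  fun_prop

end ExplicitSupersolution

open ExplicitSupersolution in
theorem explicit_supersolution_general (h₀ c : ℝ)
    (h : ℝ → ℝ → ℝ)
    (hdef : ∀ x t, h x t = h₀ * Real.exp (c * h₀ * x * (Real.exp t - 1) + t)) :
    ∀ x > (0:ℝ), ∀ t ≥ (0:ℝ),
      h x t = h₀ + ∫ s in (0:ℝ)..t,
        (c * ∫ y in (0:ℝ)..x, h (x - y) s * h y s) + h x s := by
  intro x _ t _
  obtain rfl : h = profile h₀ c := funext₂ hdef
  have hintegrand : ∀ s, (c * ∫ y in (0:ℝ)..x, profile h₀ c (x - y) s * profile h₀ c y s)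
      + profile h₀ c x s = (c * h₀ * x * exp s + 1) * profile h₀ c x s := by
    intro s
    rw [integral_profile_mul_profile]
    ring
  have hcont : Continuous fun s => (c * h₀ * x * exp s + 1) * profile h₀ c x s :=
    (by fun_prop : Continuous fun s => c * h₀ * x * exp s + 1).mul (continuous_profile h₀ c x)
  simp only [hintegrand]
  rw [intervalIntegral.integral_eq_sub_of_hasDerivAt (fun s _ => hasDerivAt_profile h₀ c x s)
    (hcont.intervalIntegrable 0 t), profile_zero]
  ring

theorem explicit_supersolution (h₀ c : ℝ) (hh₀ : 0 < h₀) (hc : 0 < c)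
    (h : ℝ → ℝ → ℝ)
    (hdef : ∀ x t, h x t = h₀ * Real.exp (c * h₀ * x * (Real.exp t - 1) + t)) :
    ∀ x > (0:ℝ), ∀ t ≥ (0:ℝ),
      h x t = h₀ + ∫ s in (0:ℝ)..t,
        (c * ∫ y in (0:ℝ)..x, h (x - y) s * h y s) + h x s :=
  explicit_supersolution_general h₀ c h hdef
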